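/- For every natural number k ≥ 1, the answer to the Most Clicks Problem on the (6k − 1) × (6k − 1) grid graph is at most 26k² − 12k + 1. That is, for every configuration b in the range of the Lights Out map Φ of the (6k − 1) × (6k − 1) grid graph, there exists x with Φ(x) = b whose Hamming weight is at most 26k² − 12k + 1. -/

import Mathlib

/-- The Lights Out map of a finite simple graph `G`:
`Φ_G(x)(v) = x(v) + Σ_{u ~ v} x(u)` over GF(2), as a GF(2)-linear map. -/
def lightsOut {V : Type*} [Fintype V] (G : SimpleGraph V) [DecidableRel G.Adj] :
    (V → ZMod 2) →ₗ[ZMod 2] (V → ZMod 2) where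
  toFun x := fun v => x v + ∑ u ∈ G.neighborFinset v, x u
  map_add' x y := by
    funext v
    simp [Finset.sum_add_distrib]
    ring
  map_smul' c x := by
    funext v
    simp [Finset.mul_sum, mul_add]

/-- The Hamming weight of a GF(2) vector: the number of coordinates equal to 1. -/
def hammingWeight {V : Type*} [Fintype V] (x : V → ZMod 2) : ℕ :=
  (Finset.univ.filter fun v => x v = 1).card

/-- The `n × n` grid graph on `Fin n × Fin n`: two vertices are adjacent when they
agree in one coordinate and differ by exactly 1 in the other. -/
def gridGraph (n : ℕ) : SimpleGraph (Fin n × Fin n) where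
  Adj a b := (a.1 = b.1 ∧ (a.2.val + 1 = b.2.val ∨ b.2.val + 1 = a.2.val)) ∨
             (a.2 = b.2 ∧ (a.1.val + 1 = b.1.val ∨ b.1.val + 1 = a.1.val))
  symm := by
    constructor
    rintro a b (⟨h1, h2⟩ | ⟨h1, h2⟩)
    · exact Or.inl ⟨h1.symm, h2.symm⟩
    · exact Or.inr ⟨h1.symm, h2.symm⟩
  loopless := by
    constructor
    rintro a (⟨_, h | h⟩ | ⟨_, h | h⟩) <;> omega

instance (n : ℕ) : DecidableRel (gridGraph n).Adj := fun a b => by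
  unfold gridGraph
  exact inferInstanceAs (Decidable (_ ∨ _))

/-- `d n`: the GF(2)-dimension of the kernel of the Lights Out map of the `n × n` grid. -/
noncomputable def gridNullity (n : ℕ) : ℕ :=
  Module.finrank (ZMod 2) (LinearMap.ker (lightsOut (gridGraph n)))

/-!
The grid is the box product of two paths, and on product vectors the Lights Out map
satisfies `Φ(f ⊗ g) = Φf ⊗ g + f ⊗ Φg + f ⊗ g` over GF(2). So if `Φf = 0` and `Φg = g` on
the path `P_n`, both `f ⊗ g` and `g ⊗ f` lie in the kernel of the grid's map. Given one
solution `x`, the four solutions `x + j` with `j ∈ span {f ⊗ g, g ⊗ f}` have total weight at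
most `4n² - 2S`, where `S` is the number of vertices on which `f ⊗ g` or `g ⊗ f` is `1`; one
of them has weight at most `n² - S / 2`. For `n = 6k - 1` the path vectors `110110…11` and
`1010…1` give `S = 20k²`, and `(6k - 1)² - 10k² = 26k² - 12k + 1`.
-/

open Finset SimpleGraph

section Weight

variable {V : Type*} [Fintype V]

lemma hammingWeight_eq_sum (x : V → ZMod 2) :
    hammingWeight x = ∑ v, if x v = 1 then 1 else 0 :=
  card_filter _ _

/-- At a vertex where `p` or `q` is `1`, exactly two of the four translates `x + j` are `1`. -/
lemma exists_hammingWeight_add_le (x p q : V → ZMod 2) :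
    ∃ j ∈ ({0, p, q, p + q} : Set (V → ZMod 2)),
      2 * hammingWeight (x + j) + #{v | p v = 1 ∨ q v = 1} ≤ 2 * Fintype.card V := by
  have pointwise : ∀ a b c : ZMod 2,
      (if a = 1 then 1 else 0) + (if a + b = 1 then 1 else 0) + (if a + c = 1 then 1 else 0) +
        (if a + (b + c) = 1 then 1 else 0) + 2 * (if b = 1 ∨ c = 1 then 1 else 0) ≤ 4 := by
    decide
  have total : hammingWeight x + hammingWeight (x + p) + hammingWeight (x + q) +
      hammingWeight (x + (p + q)) + 2 * #{v | p v = 1 ∨ q v = 1} ≤ 4 * Fintype.card V := by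
    simp only [hammingWeight_eq_sum, card_filter, mul_sum, ← sum_add_distrib]
    calc _ ≤ ∑ _v : V, 4 := sum_le_sum fun v _ => pointwise (x v) (p v) (q v)
      _ = _ := by simp [mul_comm]
  by_contra! h
  have h0 := h 0 (by simp)
  have hp := h p (by simp)
  have hq := h q (by simp)
  have hpq := h (p + q) (by simp)
  rw [add_zero] at h0
  omega

end Weight

lemma lightsOut_congr {V : Type*} [Fintype V] {G G' : SimpleGraph V} [DecidableRel G.Adj]
    [DecidableRel G'.Adj] (h : G = G') : lightsOut G = lightsOut G' := by
  subst h
  congr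

section BoxProd

variable {V W : Type*} [Fintype V] [Fintype W] {G : SimpleGraph V} {H : SimpleGraph W}
  [DecidableRel G.Adj] [DecidableRel H.Adj]

instance [DecidableEq V] [DecidableEq W] : DecidableRel (G □ H).Adj :=
  fun _ _ => decidable_of_iff _ boxProd_adj.symm

variable [DecidableRel (G □ H).Adj]

lemma lightsOut_boxProd_apply (f : V → ZMod 2) (g : W → ZMod 2) (v : V × W) :
    lightsOut (G □ H) (fun v => f v.1 * g v.2) v =
      lightsOut G f v.1 * g v.2 + f v.1 * lightsOut H g v.2 + f v.1 * g v.2 := by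
  simp only [lightsOut, LinearMap.coe_mk, AddHom.coe_mk, neighborFinset_boxProd, sum_disjUnion,
    sum_product, sum_singleton, ← sum_mul, ← mul_sum]
  have two : (2 : ZMod 2) = 0 := rfl
  linear_combination (-(f v.1 * g v.2)) * two

lemma lightsOut_boxProd_eq_zero_of_eq_zero_of_eq_self {f : V → ZMod 2} {g : W → ZMod 2}
    (hf : lightsOut G f = 0) (hg : lightsOut H g = g) :
    lightsOut (G □ H) (fun v => f v.1 * g v.2) = 0 := by
  ext v
  rw [lightsOut_boxProd_apply, hf, hg, Pi.zero_apply, zero_mul, zero_add,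
    CharTwo.add_self_eq_zero, Pi.zero_apply]

lemma lightsOut_boxProd_eq_zero_of_eq_self_of_eq_zero {f : V → ZMod 2} {g : W → ZMod 2}
    (hf : lightsOut G f = f) (hg : lightsOut H g = 0) :
    lightsOut (G □ H) (fun v => f v.1 * g v.2) = 0 := by
  ext v
  rw [lightsOut_boxProd_apply, hf, hg, Pi.zero_apply, mul_zero, add_zero,
    CharTwo.add_self_eq_zero, Pi.zero_apply]

end BoxProd

section Path

variable {n : ℕ}

instance : DecidableRel (pathGraph n).Adj :=
  fun _ _ => decidable_of_iff _ pathGraph_adj.symm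

lemma sum_neighborFinset_pathGraph {R : Type*} [AddCommMonoid R] (ψ : ℕ → R) (i : Fin n) :
    ∑ j ∈ (pathGraph n).neighborFinset i, ψ j =
      (if 0 < i.val then ψ (i - 1) else 0) + (if i.val + 1 < n then ψ (i + 1) else 0) := by
  have split : ∀ j : ℕ, (if (i : ℕ) + 1 = j ∨ j + 1 = i then ψ j else 0) =
      (if 0 < i.val then if (i : ℕ) - 1 = j then ψ j else 0 else 0) +
        (if (i : ℕ) + 1 = j then ψ j else 0) := by
    intro j
    by_cases h : (i : ℕ) + 1 = j <;> split_ifs <;> first | omega | simp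
  simp only [neighborFinset_eq_filter, sum_filter, pathGraph_adj]
  rw [Fin.sum_univ_eq_sum_range (fun j => if (i : ℕ) + 1 = j ∨ j + 1 = i then ψ j else 0)]
  simp only [split, sum_add_distrib, sum_ite_irrel, sum_const_zero, sum_ite_eq, mem_range]
  congr 1
  split_ifs <;> first | rfl | omega

def indicatorVec (P : ℕ → Prop) [DecidablePred P] (n : ℕ) : Fin n → ZMod 2 :=
  fun i => if P i then 1 else 0

lemma lightsOut_pathGraph_indicatorVec_apply (P : ℕ → Prop) [DecidablePred P] (i : Fin n) :
    lightsOut (pathGraph n) (indicatorVec P n) i =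
      indicatorVec P n i + (if 0 < i.val ∧ P (i - 1) then 1 else 0) +
        (if i.val + 1 < n ∧ P (i + 1) then 1 else 0) := by
  rw [lightsOut, LinearMap.coe_mk, AddHom.coe_mk, add_assoc]
  simp only [ite_and]
  exact congrArg _ (sum_neighborFinset_pathGraph (fun j => if P j then 1 else 0) i)

lemma lightsOut_pathGraph_indicatorVec_mod_three (hn : n % 3 = 2) :
    lightsOut (pathGraph n) (indicatorVec (· % 3 ≠ 2) n) = 0 := by
  ext i
  have := i.isLt
  rw [lightsOut_pathGraph_indicatorVec_apply, indicatorVec, Pi.zero_apply]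
  split_ifs <;> first | decide | omega

lemma lightsOut_pathGraph_indicatorVec_even (hn : n % 2 = 1) :
    lightsOut (pathGraph n) (indicatorVec (· % 2 = 0) n) = indicatorVec (· % 2 = 0) n := by
  ext i
  have := i.isLt
  rw [lightsOut_pathGraph_indicatorVec_apply, indicatorVec]
  split_ifs <;> first | decide | omega

end Path

section Counting

lemma Nat.count_mul_add_of_periodic {p : ℕ → Prop} [DecidablePred p] {c : ℕ}
    (hp : Function.Periodic p c) (m r : ℕ) :
    Nat.count p (c * m + r) = m * Nat.count p c + Nat.count p r := by
  induction m with
  | zero => simp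
  | succ m ih =>
    have hshift : (fun k => p (c + k)) = p := funext fun k => by rw [add_comm, hp]
    rw [show c * (m + 1) + r = c + (c * m + r) by ring, Nat.count_add]
    simp only [hshift, ih]
    ring

lemma card_filter_fin_eq_count (P : ℕ → Prop) [DecidablePred P] (n : ℕ) :
    #{i : Fin n | P i} = Nat.count P n := by
  rw [Nat.count_eq_card_filter_range, card_filter, card_filter,
    Fin.sum_univ_eq_sum_range (fun i => if P i then 1 else 0)]

lemma card_product_union_product_add {α : Type*} [DecidableEq α] (s t : Finset α) :
    #(s ×ˢ t ∪ t ×ˢ s) + #(s ∩ t) ^ 2 = 2 * (#s * #t) := by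
  have hinter : s ×ˢ t ∩ t ×ˢ s = (s ∩ t) ×ˢ (s ∩ t) := by
    rw [product_inter_product, inter_comm t s]
  rw [sq, ← card_product, ← hinter, card_union_add_card_inter, card_product, card_product,
    mul_comm #t, two_mul]

lemma indicatorVec_mul_indicatorVec_eq_one_iff {P Q : ℕ → Prop} [DecidablePred P]
    [DecidablePred Q] {n : ℕ} (i j : Fin n) :
    indicatorVec P n i * indicatorVec Q n j = 1 ↔ P i ∧ Q j := by
  unfold indicatorVec
  split_ifs <;> simp_all

lemma card_indicatorVec_tensor (P Q : ℕ → Prop) [DecidablePred P] [DecidablePred Q] (n : ℕ) :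
    #{v : Fin n × Fin n | indicatorVec P n v.1 * indicatorVec Q n v.2 = 1 ∨
        indicatorVec Q n v.1 * indicatorVec P n v.2 = 1} + Nat.count (fun i => P i ∧ Q i) n ^ 2 =
      2 * (Nat.count P n * Nat.count Q n) := by
  simp only [indicatorVec_mul_indicatorVec_eq_one_iff]
  rw [← card_filter_fin_eq_count, ← card_filter_fin_eq_count, ← card_filter_fin_eq_count,
    filter_and, ← card_product_union_product_add, ← filter_product, ← filter_product, ← filter_or,
    univ_product_univ]

end Counting

lemma gridGraph_eq_boxProd (n : ℕ) : gridGraph n = pathGraph n □ pathGraph n := by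
  ext u v
  simp only [gridGraph, boxProd_adj, pathGraph_adj, Fin.ext_iff]
  tauto

theorem gridGraph_exists_lightsOut_eq_hammingWeight_le {n k : ℕ} (hn : n + 1 = 6 * k)
    (x : Fin n × Fin n → ZMod 2) :
    ∃ y, lightsOut (gridGraph n) y = lightsOut (gridGraph n) x ∧
      hammingWeight y + 10 * k ^ 2 ≤ n ^ 2 := by
  obtain ⟨m, rfl, rfl⟩ : ∃ m, n = 6 * m + 5 ∧ k = m + 1 := ⟨k - 1, by omega, by omega⟩
  have count_eq : ∀ (P : ℕ → Prop) [DecidablePred P] (a : ℕ), Function.Periodic P 6 →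
      Nat.count P 6 = a → Nat.count P 5 = a → Nat.count P (6 * m + 5) = a * (m + 1) := by
    intro P _ a hP h6 h5
    rw [Nat.count_mul_add_of_periodic hP, h6, h5]
    ring
  have hS := card_indicatorVec_tensor (· % 3 ≠ 2) (· % 2 = 0) (6 * m + 5)
  rw [count_eq (· % 3 ≠ 2) 4 (fun i => by simp only [eq_iff_iff]; omega)
      (by decide) (by decide),
    count_eq (· % 2 = 0) 3 (fun i => by simp only [eq_iff_iff]; omega) (by decide) (by decide),
    count_eq (fun i => i % 3 ≠ 2 ∧ i % 2 = 0) 2 (fun i => by simp only [eq_iff_iff]; omega)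
      (by decide) (by decide)] at hS
  set F := indicatorVec (· % 3 ≠ 2) (6 * m + 5)
  set E := indicatorVec (· % 2 = 0) (6 * m + 5)
  have hF : lightsOut (pathGraph _) F = 0 := lightsOut_pathGraph_indicatorVec_mod_three (by omega)
  have hE : lightsOut (pathGraph _) E = E := lightsOut_pathGraph_indicatorVec_even (by omega)
  have hFE : lightsOut (gridGraph _) (fun v => F v.1 * E v.2) = 0 := by
    rw [lightsOut_congr (gridGraph_eq_boxProd _)]
    exact lightsOut_boxProd_eq_zero_of_eq_zero_of_eq_self hF hE
  have hEF : lightsOut (gridGraph _) (fun v => E v.1 * F v.2) = 0 := by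
    rw [lightsOut_congr (gridGraph_eq_boxProd _)]
    exact lightsOut_boxProd_eq_zero_of_eq_self_of_eq_zero hE hF
  obtain ⟨j, hj, hw⟩ :=
    exists_hammingWeight_add_le x (fun v => F v.1 * E v.2) (fun v => E v.1 * F v.2)
  refine ⟨x + j, ?_, ?_⟩
  · rcases hj with rfl | rfl | rfl | rfl <;> simp [hFE, hEF]
  · rw [Fintype.card_prod, Fintype.card_fin] at hw
    nlinarith

/-- For every `k ≥ 1`, every solvable configuration on the `(6k − 1) × (6k − 1)` grid
has a solution of Hamming weight at most `26k² − 12k + 1`. -/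
theorem mcp_upper_bound (k : ℕ) (hk : 1 ≤ k)
    (b : Fin (6 * k - 1) × Fin (6 * k - 1) → ZMod 2)
    (hb : b ∈ LinearMap.range (lightsOut (gridGraph (6 * k - 1)))) :
    ∃ x, lightsOut (gridGraph (6 * k - 1)) x = b ∧
      hammingWeight x ≤ 26 * k ^ 2 - 12 * k + 1 := by
  obtain ⟨x, rfl⟩ := hb
  obtain ⟨y, hy, hw⟩ := gridGraph_exists_lightsOut_eq_hammingWeight_le (k := k) (by omega) x
  refine ⟨y, hy, ?_⟩
  have hsq : (6 * k - 1) ^ 2 + 12 * k = 36 * k ^ 2 + 1 := by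
    obtain ⟨m, rfl⟩ : ∃ m, k = m + 1 := ⟨k - 1, by omega⟩
    rw [show 6 * (m + 1) - 1 = 6 * m + 5 by omega]
    ring
  omega
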